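/- Let (Xᵢ)_{i≥1} be identically distributed random vectors in ℝ^d whose norm ‖X₁‖ (Euclidean norm) has a regularly varying tail of index −α with α ∈ (0,1), and let (aₙ) be positive reals with n·P(‖X₁‖ > aₙ) → 1 as n → ∞. Then for every δ > 0, lim_{u↓0} limsup_{n→∞} P( max_{1≤k≤n} ‖ ( Σ_{i=1}^k ( (Xᵢʲ/aₙ)·1{|Xᵢʲ| ≤ u·aₙ} − E[(X₁ʲ/aₙ)·1{|X₁ʲ| ≤ u·aₙ}] ) )_{j=1,…,d} ‖ > δ ) = 0. -/

import Mathlib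

/-!
For `α < 1` no cancellation is needed. Bounding the Euclidean norm by the `ℓ¹` norm and applying
Markov's inequality to `∑ i ≤ n` of the absolute truncated summands gives
`P(max_k ‖S_k‖ > δ) ≤ (2d/δ) (n/aₙ) E[min(‖X₁‖, u aₙ)]`.
Regular variation provides `x₀` and `ρ < 2` with `P(‖X₁‖ > x/2) ≤ ρ P(‖X₁‖ > x)` for `x ≥ x₀`;
cutting `min(‖X₁‖, c)` at the dyadic levels `c/2^m` then yields the Karamata-type bound
`E[min(‖X₁‖, c)] ≤ 2x₀ + 2ρ/(2-ρ) · c P(‖X₁‖ > c)`. Since `x P(‖X₁‖ > x) → ∞` forces `n/aₙ → 0`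
and `n P(‖X₁‖ > u aₙ) → u^{-α}`, the `limsup` in `n` is at most `C u^{1-α}`.
-/

open MeasureTheory Filter Topology Finset

section Doubling

variable {F : ℝ → ℝ} {ρ x₀ : ℝ}

lemma le_pow_mul_of_doubling (hx₀ : 0 < x₀) (hρ : 0 ≤ ρ)
    (hdbl : ∀ x, x₀ ≤ x → F (x / 2) ≤ ρ * F x) :
    ∀ (k : ℕ) {c : ℝ}, x₀ ≤ c / 2 ^ k → F (c / 2 ^ k) ≤ ρ ^ k * F c
  | 0, c, _ => by simp
  | k + 1, c, hc => by
    have hc0 : 0 ≤ c := ((div_pos_iff_of_pos_right (by positivity)).1 (hx₀.trans_le hc)).le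
    have hck : x₀ ≤ c / 2 ^ k :=
      hc.trans (div_le_div_of_nonneg_left hc0 (by positivity)
        (pow_le_pow_right₀ one_le_two k.le_succ))
    calc F (c / 2 ^ (k + 1)) = F (c / 2 ^ k / 2) := by rw [pow_succ, div_div]
      _ ≤ ρ * F (c / 2 ^ k) := hdbl _ hck
      _ ≤ ρ * (ρ ^ k * F c) :=
        mul_le_mul_of_nonneg_left (le_pow_mul_of_doubling hx₀ hρ hdbl k hck) hρ
      _ = ρ ^ (k + 1) * F c := by ring

lemma exists_doubling_of_tendsto_ratio {α : ℝ} (hF : ∀ x, 0 < x → 0 < F x)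
    (hrv : Tendsto (fun x => F (2⁻¹ * x) / F x) atTop (𝓝 ((2⁻¹ : ℝ) ^ (-α))))
    (hρ : (2 : ℝ) ^ α < ρ) :
    ∃ x₀, 0 < x₀ ∧ ∀ x, x₀ ≤ x → F (x / 2) ≤ ρ * F x := by
  rw [Real.inv_rpow zero_le_two, Real.rpow_neg zero_le_two, inv_inv] at hrv
  obtain ⟨x₁, hx₁⟩ := eventually_atTop.1 (hrv.eventually_lt_const hρ)
  refine ⟨max x₁ 1, by positivity, fun x hx => ?_⟩
  have hFx := hF x (zero_lt_one.trans_le ((le_max_right _ _).trans hx))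
  rw [div_eq_inv_mul, ← div_le_iff₀ hFx]
  exact (hx₁ x ((le_max_left _ _).trans hx)).le

lemma tendsto_mul_atTop_of_doubling (hF : Antitone F) (hx₀ : 0 < x₀) (hFx₀ : 0 < F x₀)
    (hρ : 0 < ρ) (hρ2 : ρ < 2) (hdbl : ∀ x, x₀ ≤ x → F (x / 2) ≤ ρ * F x) :
    Tendsto (fun x => x * F x) atTop atTop := by
  set A := x₀ * F x₀ / ρ
  -- on `[2 ^ k * x₀, 2 ^ (k + 1) * x₀)` doubling gives `F x ≥ F x₀ / ρ ^ (k + 1)`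
  have hgrowth : ∀ (j : ℕ) (x : ℝ), 2 ^ j * x₀ ≤ x → A * (2 / ρ) ^ j ≤ x * F x := by
    intro j x hx
    have hx₀x : 1 ≤ x / x₀ :=
      (one_le_div hx₀).2 ((le_mul_of_one_le_left hx₀.le (one_le_pow₀ one_le_two)).trans hx)
    obtain ⟨k, hk, hk'⟩ := exists_nat_pow_near hx₀x one_lt_two
    rw [le_div_iff₀ hx₀] at hk
    rw [div_lt_iff₀ hx₀] at hk'
    have hjk : j ≤ k := Nat.lt_succ_iff.1 <| (pow_lt_pow_iff_right₀ one_lt_two).1 <|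
      lt_of_mul_lt_mul_right (hx.trans_lt hk') hx₀.le
    have hFx : F x₀ ≤ ρ ^ (k + 1) * F x := by
      have h2 : (2 : ℝ) ^ (k + 1) * x₀ / 2 ^ (k + 1) = x₀ := by field_simp
      calc F x₀ = F (2 ^ (k + 1) * x₀ / 2 ^ (k + 1)) := by rw [h2]
        _ ≤ ρ ^ (k + 1) * F (2 ^ (k + 1) * x₀) := le_pow_mul_of_doubling hx₀ hρ.le hdbl _ h2.ge
        _ ≤ ρ ^ (k + 1) * F x := by gcongr; exact hF hk'.le
    calc A * (2 / ρ) ^ j ≤ A * (2 / ρ) ^ k := by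
          gcongr
          · rw [le_div_iff₀ hρ]; linarith
      _ = 2 ^ k * x₀ * (F x₀ / ρ ^ (k + 1)) := by simp only [A]; rw [div_pow, pow_succ]; field_simp
      _ ≤ x * F x := by
          gcongr
          · exact (by positivity : (0 : ℝ) ≤ 2 ^ k * x₀).trans hk
          · rwa [div_le_iff₀' (by positivity)]
  have hA : 0 < A := by positivity
  rw [tendsto_atTop_atTop]
  intro b
  obtain ⟨j, hj⟩ := (((tendsto_pow_atTop_atTop_of_one_lt ((one_lt_div hρ).2 hρ2)).const_mul_atTop
    hA).eventually_ge_atTop b).exists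
  exact ⟨2 ^ j * x₀, fun x hx => hj.trans (hgrowth j x hx)⟩

lemma sum_mul_le_of_doubling (hx₀ : 0 < x₀) (hρ : 0 ≤ ρ) (hρ2 : ρ < 2)
    (hdbl : ∀ x, x₀ ≤ x → F (x / 2) ≤ ρ * F x) {c : ℝ} (hc : 0 ≤ c) (hFc : 0 ≤ F c) {N : ℕ}
    (hN : ∀ m < N, x₀ ≤ c / 2 ^ (m + 1)) :
    ∑ m ∈ range N, c / 2 ^ m * F (c / 2 ^ (m + 1)) ≤ 2 * ρ / (2 - ρ) * (c * F c) :=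
  calc ∑ m ∈ range N, c / 2 ^ m * F (c / 2 ^ (m + 1))
      ≤ ∑ m ∈ range N, c * ρ * F c * (ρ / 2) ^ m := by
        refine sum_le_sum fun m hm => ?_
        calc c / 2 ^ m * F (c / 2 ^ (m + 1)) ≤ c / 2 ^ m * (ρ ^ (m + 1) * F c) := by
              gcongr
              exact le_pow_mul_of_doubling hx₀ hρ hdbl _ (hN m (mem_range.1 hm))
          _ = c * ρ * F c * (ρ / 2) ^ m := by rw [div_pow, pow_succ]; field_simp
    _ = c * ρ * F c * ∑ m ∈ Ico 0 N, (ρ / 2) ^ m := by rw [mul_sum, range_eq_Ico]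
    _ ≤ c * ρ * F c * ((ρ / 2) ^ 0 / (1 - ρ / 2)) := by
        gcongr
        exact geom_sum_Ico_le_of_lt_one (by positivity) (by linarith)
    _ = 2 * ρ / (2 - ρ) * (c * F c) := by
        have : 2 - ρ ≠ 0 := by linarith
        field_simp

lemma exists_dyadic_cutoff (hx₀ : 0 < x₀) (c : ℝ) :
    ∃ N : ℕ, c / 2 ^ N ≤ 2 * x₀ ∧ ∀ m < N, x₀ ≤ c / 2 ^ (m + 1) := by
  rcases lt_or_ge c x₀ with hcx | hcx
  · exact ⟨0, by simp; linarith, by simp⟩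
  obtain ⟨N, hN, hN'⟩ := exists_nat_pow_near ((one_le_div hx₀).2 hcx) one_lt_two
  rw [le_div_iff₀ hx₀] at hN
  rw [div_lt_iff₀ hx₀, pow_succ] at hN'
  refine ⟨N, ?_, fun m hm => ?_⟩
  · rw [div_le_iff₀ (by positivity)]
    linarith
  · rw [le_div_iff₀ (by positivity)]
    calc x₀ * 2 ^ (m + 1) ≤ x₀ * 2 ^ N := by gcongr; exacts [one_le_two, hm]
      _ ≤ c := by linarith

end Doubling

section Sequences

variable {F : ℝ → ℝ} {a : ℕ → ℝ}

lemma tendsto_atTop_of_tendsto_natCast_mul (hF : Antitone F) (hFpos : ∀ x, 0 < x → 0 < F x)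
    (han : Tendsto (fun n : ℕ => n * F (a n)) atTop (𝓝 1)) : Tendsto a atTop atTop := by
  rw [tendsto_atTop]
  intro M
  have hFM : 0 < F (max M 1) := hFpos _ (by positivity)
  filter_upwards [han.eventually_lt_const one_lt_two,
    (tendsto_natCast_atTop_atTop.atTop_mul_const hFM).eventually_gt_atTop 2] with n h1 h2
  by_contra! h
  have : F (max M 1) ≤ F (a n) := hF (h.le.trans (le_max_left _ _))
  nlinarith [(n.cast_nonneg : (0 : ℝ) ≤ n)]

lemma tendsto_natCast_div_of_tendsto_natCast_mul (hFpos : ∀ x, 0 < x → 0 < F x)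
    (hφ : Tendsto (fun x => x * F x) atTop atTop) (ha : Tendsto a atTop atTop)
    (hapos : ∀ n, 0 < a n) (han : Tendsto (fun n : ℕ => n * F (a n)) atTop (𝓝 1)) :
    Tendsto (fun n : ℕ => n / a n) atTop (𝓝 0) := by
  have h := han.mul (hφ.comp ha).inv_tendsto_atTop
  rw [one_mul] at h
  refine h.congr fun n => ?_
  have := hFpos _ (hapos n)
  have := hapos n
  simp only [Pi.inv_apply, Function.comp_apply]
  field_simp

lemma tendsto_natCast_mul_comp_mul {l L : ℝ} (hFpos : ∀ x, 0 < x → 0 < F x)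
    (hrv : Tendsto (fun x => F (l * x) / F x) atTop (𝓝 L)) (ha : Tendsto a atTop atTop)
    (hapos : ∀ n, 0 < a n) (han : Tendsto (fun n : ℕ => n * F (a n)) atTop (𝓝 1)) :
    Tendsto (fun n : ℕ => n * F (l * a n)) atTop (𝓝 L) := by
  have h := (hrv.comp ha).mul han
  rw [mul_one] at h
  refine h.congr fun n => ?_
  have := hFpos _ (hapos n)
  simp only [Function.comp_apply]
  field_simp

end Sequences

lemma limsup_le_of_le_of_tendsto {ι : Type*} {l : Filter ι} [l.NeBot] {f g : ι → ℝ} {L : ℝ}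
    (hf : ∀ i, 0 ≤ f i) (hfg : ∀ i, f i ≤ g i) (hg : Tendsto g l (𝓝 L)) : limsup f l ≤ L :=
  (limsup_le_limsup (.of_forall hfg) (isCoboundedUnder_le_of_le l hf) hg.isBoundedUnder_le).trans
    hg.limsup_eq.le

lemma tendsto_nhdsWithin_zero_of_le_rpow {G : ℝ → ℝ} {C β : ℝ} (hβ : 0 < β) (hG0 : ∀ u, 0 ≤ G u)
    (hG : ∀ u, 0 < u → G u ≤ C * u ^ β) : Tendsto G (𝓝[>] 0) (𝓝 0) := by
  have hrpow : Tendsto (fun u : ℝ => C * u ^ β) (𝓝[>] 0) (𝓝 0) := by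
    have h := (Real.continuousAt_rpow_const 0 β (Or.inr hβ.le)).tendsto.const_mul C
    rw [Real.zero_rpow hβ.ne', mul_zero] at h
    exact h.mono_left nhdsWithin_le_nhds
  exact tendsto_of_tendsto_of_tendsto_of_le_of_le' tendsto_const_nhds hrpow (.of_forall hG0)
    (eventually_nhdsWithin_of_forall hG)

lemma min_le_add_sum_ite (y : ℝ) {c : ℝ} (hc : 0 ≤ c) :
    ∀ N : ℕ, min y c ≤ c / 2 ^ N + ∑ m ∈ range N, if c / 2 ^ (m + 1) < y then c / 2 ^ m else 0
  | 0 => by simp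
  | N + 1 => by
    have hsum : 0 ≤ ∑ m ∈ range N, if c / 2 ^ (m + 1) < y then c / 2 ^ m else 0 :=
      sum_nonneg fun m _ => by split_ifs <;> positivity
    rw [sum_range_succ]
    split_ifs with hy
    · have := min_le_add_sum_ite y hc N
      have : 0 ≤ c / 2 ^ (N + 1) := by positivity
      linarith
    · linarith [min_le_left y c, not_lt.1 hy]

lemma EuclideanSpace.norm_le_sum_abs {ι : Type*} [Fintype ι] (x : EuclideanSpace ℝ ι) :
    ‖x‖ ≤ ∑ i, |x i| := by
  rw [EuclideanSpace.norm_eq, Real.sqrt_le_left (sum_nonneg fun i _ => abs_nonneg _)]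
  simpa only [Real.norm_eq_abs] using sum_sq_le_sq_sum_of_nonneg fun i _ => abs_nonneg (x i)

lemma abs_truncate_div_le {ι : Type*} [Fintype ι] (x : EuclideanSpace ℝ ι) (j : ι) {b c : ℝ}
    (hb : 0 < b) (hc : 0 ≤ c) :
    |if |x j| ≤ c then x j / b else 0| ≤ min ‖x‖ c / b := by
  split_ifs with h
  · rw [abs_div, abs_of_pos hb]
    gcongr
    exact le_min (by simpa using PiLp.norm_apply_le x j) h
  · rw [abs_zero]; positivity

section Probability

variable {Ω : Type*} [MeasurableSpace Ω] {μ : Measure Ω}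

lemma integral_min_le_of_doubling [IsProbabilityMeasure μ] {Y : Ω → ℝ} (hY : Measurable Y)
    (hY0 : 0 ≤ Y) {ρ x₀ : ℝ} (hx₀ : 0 < x₀) (hρ : 0 ≤ ρ) (hρ2 : ρ < 2)
    (hdbl : ∀ x, x₀ ≤ x → μ.real {ω | x / 2 < Y ω} ≤ ρ * μ.real {ω | x < Y ω})
    {c : ℝ} (hc : 0 < c) :
    ∫ ω, min (Y ω) c ∂μ ≤ 2 * x₀ + 2 * ρ / (2 - ρ) * (c * μ.real {ω | c < Y ω}) := by
  obtain ⟨N, hN, hNx₀⟩ := exists_dyadic_cutoff hx₀ c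
  set F : ℝ → ℝ := fun x => μ.real {ω | x < Y ω}
  have hind : ∀ m, Integrable (fun ω => if c / 2 ^ (m + 1) < Y ω then c / 2 ^ m else 0) μ :=
    fun m => (integrable_const _).indicator (measurableSet_lt measurable_const hY)
  calc ∫ ω, min (Y ω) c ∂μ
      ≤ ∫ ω, (c / 2 ^ N + ∑ m ∈ range N,
          if c / 2 ^ (m + 1) < Y ω then c / 2 ^ m else 0) ∂μ :=
        integral_mono_of_nonneg (.of_forall fun ω => le_min (hY0 ω) hc.le)
          ((integrable_const _).add (integrable_finsetSum _ fun m _ => hind m))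
          (.of_forall fun ω => min_le_add_sum_ite (Y ω) hc.le N)
    _ = c / 2 ^ N + ∑ m ∈ range N, c / 2 ^ m * F (c / 2 ^ (m + 1)) := by
        rw [integral_add (integrable_const _) (integrable_finsetSum _ fun m _ => hind m),
          integral_finsetSum _ fun m _ => hind m, integral_const, probReal_univ, one_smul]
        congr 1
        refine sum_congr rfl fun m _ => ?_
        rw [mul_comm, ← smul_eq_mul,
          ← integral_indicator_const _ (measurableSet_lt measurable_const hY)]
        rfl
    _ ≤ 2 * x₀ + 2 * ρ / (2 - ρ) * (c * F c) :=
        add_le_add hN (sum_mul_le_of_doubling hx₀ hρ hρ2 hdbl hc.le measureReal_nonneg hNx₀)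

lemma measureReal_exists_norm_partialSum_gt_le [IsFiniteMeasure μ] {E : Type*}
    [NormedAddCommGroup E] {f : ℕ → Ω → E} {G : ℕ → Ω → ℝ} (hG : ∀ i, Integrable (G i) μ)
    (hfG : ∀ i ω, ‖f i ω‖ ≤ G i ω) {δ : ℝ} (hδ : 0 < δ) (n : ℕ) :
    μ.real {ω | ∃ k, 1 ≤ k ∧ k ≤ n ∧ δ < ‖∑ i ∈ Icc 1 k, f i ω‖}
      ≤ (∑ i ∈ Icc 1 n, ∫ ω, G i ω ∂μ) / δ := by
  have hG0 : ∀ i ω, 0 ≤ G i ω := fun i ω => (norm_nonneg _).trans (hfG i ω)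
  have hsub : {ω | ∃ k, 1 ≤ k ∧ k ≤ n ∧ δ < ‖∑ i ∈ Icc 1 k, f i ω‖}
      ⊆ {ω | δ ≤ ∑ i ∈ Icc 1 n, G i ω} := by
    rintro ω ⟨k, -, hkn, hδk⟩
    calc δ ≤ ‖∑ i ∈ Icc 1 k, f i ω‖ := hδk.le
      _ ≤ ∑ i ∈ Icc 1 k, ‖f i ω‖ := norm_sum_le _ _
      _ ≤ ∑ i ∈ Icc 1 k, G i ω := sum_le_sum fun i _ => hfG i ω
      _ ≤ ∑ i ∈ Icc 1 n, G i ω :=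
        sum_le_sum_of_subset_of_nonneg (Icc_subset_Icc_right hkn) fun i _ _ => hG0 i ω
  have hmarkov := mul_meas_ge_le_integral_of_nonneg (f := fun ω => ∑ i ∈ Icc 1 n, G i ω)
    (.of_forall fun ω => sum_nonneg fun i _ => hG0 i ω) (integrable_finsetSum _ fun i _ => hG i) δ
  rw [integral_finsetSum _ fun i _ => hG i] at hmarkov
  rw [le_div_iff₀' hδ]
  exact (mul_le_mul_of_nonneg_left (measureReal_mono hsub) hδ.le).trans hmarkov

lemma measureReal_exists_norm_centeredSum_gt_le [IsProbabilityMeasure μ] {ι : Type*} [Fintype ι]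
    {h : ℕ → ι → Ω → ℝ} (hh : ∀ i j, Integrable (h i j) μ) (m : ι → ℝ) {δ : ℝ} (hδ : 0 < δ)
    (n : ℕ) :
    μ.real {ω | ∃ k, 1 ≤ k ∧ k ≤ n ∧
        δ < ‖(WithLp.equiv 2 (ι → ℝ)).symm (fun j => ∑ i ∈ Icc 1 k, (h i j ω - m j))‖}
      ≤ (∑ i ∈ Icc 1 n, ∑ j, (∫ ω, |h i j ω| ∂μ + |m j|)) / δ := by
  set G : ℕ → Ω → ℝ := fun i ω => ∑ j, (|h i j ω| + |m j|)
  have hG : ∀ i, Integrable (G i) μ := fun i =>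
    integrable_finsetSum _ fun j _ => (hh i j).abs.add (integrable_const _)
  have hfG : ∀ i ω, ‖WithLp.toLp 2 (fun j => h i j ω - m j)‖ ≤ G i ω := fun i ω =>
    (EuclideanSpace.norm_le_sum_abs _).trans (sum_le_sum fun j _ => abs_sub _ _)
  have hGint : ∀ i, ∫ ω, G i ω ∂μ = ∑ j, (∫ ω, |h i j ω| ∂μ + |m j|) := fun i => by
    rw [integral_finsetSum (f := fun j ω => |h i j ω| + |m j|) _
      fun j _ => (hh i j).abs.add (integrable_const _)]
    refine sum_congr rfl fun j _ => ?_
    rw [integral_add (hh i j).abs (integrable_const _), integral_const, probReal_univ, one_smul]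
  simp only [← hGint]
  convert measureReal_exists_norm_partialSum_gt_le hG hfG hδ n using 6 with ω
  simp only [WithLp.equiv_symm_apply, ← WithLp.toLp_sum, ← Finset.sum_fn]

lemma measureReal_exists_norm_truncatedSum_gt_le [IsProbabilityMeasure μ] {d : ℕ}
    {X : ℕ → Ω → EuclideanSpace ℝ (Fin d)} (hmeas : ∀ i, Measurable (X i))
    (hident : ∀ i, 1 ≤ i → Measure.map (X i) μ = Measure.map (X 1) μ)
    {b c δ : ℝ} (hb : 0 < b) (hc : 0 ≤ c) (hδ : 0 < δ) (n : ℕ) :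
    μ.real {ω | ∃ k, 1 ≤ k ∧ k ≤ n ∧ δ < ‖(WithLp.equiv 2 (Fin d → ℝ)).symm (fun j =>
        ∑ i ∈ Icc 1 k, ((if |X i ω j| ≤ c then X i ω j / b else 0)
          - ∫ ω', (if |X 1 ω' j| ≤ c then X 1 ω' j / b else 0) ∂μ))‖}
      ≤ 2 * d / δ * (n / b * ∫ ω, min ‖X 1 ω‖ c ∂μ) := by
  set g : Fin d → EuclideanSpace ℝ (Fin d) → ℝ := fun j x => if |x j| ≤ c then x j / b else 0
  have hg_meas : ∀ j, Measurable (g j) := by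
    intro j
    have hj : Measurable fun x : EuclideanSpace ℝ (Fin d) => x j :=
      (measurable_pi_apply j).comp (WithLp.measurable_ofLp 2 (Fin d → ℝ))
    exact Measurable.ite (measurableSet_le hj.abs measurable_const) (hj.div_const _)
      measurable_const
  have hmin_meas : Measurable fun x : EuclideanSpace ℝ (Fin d) => min ‖x‖ c :=
    measurable_norm.min measurable_const
  have hmin_int : ∀ i, Integrable (fun ω => min ‖X i ω‖ c) μ := fun i =>
    (integrable_const c).mono' (hmin_meas.comp (hmeas i)).aestronglyMeasurable
      (.of_forall fun ω => by
        rw [Real.norm_eq_abs, abs_of_nonneg (le_min (norm_nonneg _) hc)]; exact min_le_right _ _)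
  have hg_int : ∀ i j, Integrable (fun ω => g j (X i ω)) μ := fun i j =>
    ((hmin_int i).div_const b).mono' ((hg_meas j).comp (hmeas i)).aestronglyMeasurable
      (.of_forall fun ω => abs_truncate_div_le (X i ω) j hb hc)
  have habs_le : ∀ i j, 1 ≤ i → ∫ ω, |g j (X i ω)| ∂μ ≤ (∫ ω, min ‖X 1 ω‖ c ∂μ) / b := by
    intro i j hi
    have hident_min : ∫ ω, min ‖X i ω‖ c ∂μ = ∫ ω, min ‖X 1 ω‖ c ∂μ :=
      (ProbabilityTheory.IdentDistrib.comp
        ⟨(hmeas i).aemeasurable, (hmeas 1).aemeasurable, hident i hi⟩ hmin_meas).integral_eq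
    rw [← hident_min, ← integral_div]
    exact integral_mono (hg_int i j).abs ((hmin_int i).div_const b)
      fun ω => abs_truncate_div_le (X i ω) j hb hc
  refine (measureReal_exists_norm_centeredSum_gt_le (h := fun i j ω => g j (X i ω)) hg_int
    (fun j => ∫ ω', g j (X 1 ω') ∂μ) hδ n).trans ?_
  calc (∑ i ∈ Icc 1 n, ∑ j, (∫ ω, |g j (X i ω)| ∂μ + |∫ ω', g j (X 1 ω') ∂μ|)) / δ
      ≤ (∑ _i ∈ Icc 1 n, ∑ _j : Fin d, 2 * ((∫ ω, min ‖X 1 ω‖ c ∂μ) / b)) / δ := by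
        gcongr with i hi j
        linarith [habs_le i j (mem_Icc.1 hi).1, habs_le 1 j le_rfl,
          (abs_integral_le_integral_abs : |∫ ω', g j (X 1 ω') ∂μ| ≤ _)]
    _ = 2 * d / δ * (n / b * ∫ ω, min ‖X 1 ω‖ c ∂μ) := by simp; ring

lemma measureReal_exists_norm_truncatedSum_gt_le_of_doubling [IsProbabilityMeasure μ] {d : ℕ}
    {X : ℕ → Ω → EuclideanSpace ℝ (Fin d)} (hmeas : ∀ i, Measurable (X i))
    (hident : ∀ i, 1 ≤ i → Measure.map (X i) μ = Measure.map (X 1) μ)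
    {ρ x₀ : ℝ} (hx₀ : 0 < x₀) (hρ : 0 ≤ ρ) (hρ2 : ρ < 2)
    (hdbl : ∀ x, x₀ ≤ x → μ.real {ω | x / 2 < ‖X 1 ω‖} ≤ ρ * μ.real {ω | x < ‖X 1 ω‖})
    {b u δ : ℝ} (hb : 0 < b) (hu : 0 < u) (hδ : 0 < δ) (n : ℕ) :
    μ.real {ω | ∃ k, 1 ≤ k ∧ k ≤ n ∧ δ < ‖(WithLp.equiv 2 (Fin d → ℝ)).symm (fun j =>
        ∑ i ∈ Icc 1 k, ((if |X i ω j| ≤ u * b then X i ω j / b else 0)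
          - ∫ ω', (if |X 1 ω' j| ≤ u * b then X 1 ω' j / b else 0) ∂μ))‖}
      ≤ 2 * d / δ * (2 * x₀ * (n / b)
          + 2 * ρ / (2 - ρ) * (u * (n * μ.real {ω | u * b < ‖X 1 ω‖}))) := by
  have hc : 0 < u * b := mul_pos hu hb
  calc _ ≤ 2 * d / δ * (n / b * ∫ ω, min ‖X 1 ω‖ (u * b) ∂μ) :=
        measureReal_exists_norm_truncatedSum_gt_le hmeas hident hb hc.le hδ n
    _ ≤ 2 * d / δ * (n / b *
          (2 * x₀ + 2 * ρ / (2 - ρ) * (u * b * μ.real {ω | u * b < ‖X 1 ω‖}))) := by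
        gcongr
        exact integral_min_le_of_doubling (hmeas 1).norm (fun ω => norm_nonneg _) hx₀ hρ hρ2 hdbl hc
    _ = _ := by field_simp

end Probability

theorem vanishing_small_jumps_general
    {Ω : Type*} [MeasurableSpace Ω] (ℙ : Measure Ω) [IsProbabilityMeasure ℙ]
    {d : ℕ} (X : ℕ → Ω → EuclideanSpace ℝ (Fin d))
    (hmeas : ∀ i, Measurable (X i))
    (hident : ∀ i, 1 ≤ i → Measure.map (X i) ℙ = Measure.map (X 1) ℙ)
    (α : ℝ) (hα1 : α < 1)
    (hpos : ∀ x : ℝ, 0 < x → 0 < ℙ {ω | ‖X 1 ω‖ > x})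
    (hrv : ∀ l : ℝ, 0 < l →
      Tendsto (fun x : ℝ => (ℙ {ω | ‖X 1 ω‖ > l * x}).toReal / (ℙ {ω | ‖X 1 ω‖ > x}).toReal)
        atTop (nhds (l ^ (-α))))
    (a : ℕ → ℝ) (hapos : ∀ n, 0 < a n)
    (han : Tendsto (fun n : ℕ => (n : ℝ) * (ℙ {ω | ‖X 1 ω‖ > a n}).toReal) atTop (nhds 1))
    (δ : ℝ) (hδ : 0 < δ) :
    Tendsto
      (fun u : ℝ =>
        Filter.limsup
          (fun n : ℕ =>
            (ℙ {ω | ∃ k, 1 ≤ k ∧ k ≤ n ∧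
              δ < ‖(WithLp.equiv 2 (Fin d → ℝ)).symm (fun j =>
                ∑ i ∈ Finset.Icc 1 k,
                  ((if |X i ω j| ≤ u * a n then X i ω j / a n else 0)
                    - ∫ ω', (if |X 1 ω' j| ≤ u * a n then X 1 ω' j / a n else 0) ∂ℙ))‖}).toReal)
          atTop)
      (nhdsWithin 0 (Set.Ioi 0)) (nhds 0) := by
  set F : ℝ → ℝ := fun x => ℙ.real {ω | x < ‖X 1 ω‖}
  have hFanti : Antitone F := fun x y hxy => measureReal_mono fun ω hω => hxy.trans_lt hω
  have hFpos : ∀ x, 0 < x → 0 < F x := fun x hx =>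
    ENNReal.toReal_pos (hpos x hx).ne' (measure_ne_top _ _)
  obtain ⟨ρ, hαρ, hρ2⟩ : ∃ ρ, (2 : ℝ) ^ α < ρ ∧ ρ < 2 :=
    exists_between (by simpa using Real.rpow_lt_rpow_of_exponent_lt one_lt_two hα1)
  have hρ : 0 < ρ := (Real.rpow_pos_of_pos two_pos α).trans hαρ
  obtain ⟨x₀, hx₀, hdbl⟩ := exists_doubling_of_tendsto_ratio hFpos (hrv 2⁻¹ (by norm_num)) hαρ
  have ha : Tendsto a atTop atTop := tendsto_atTop_of_tendsto_natCast_mul hFanti hFpos han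
  have hna : Tendsto (fun n : ℕ => n / a n) atTop (𝓝 0) :=
    tendsto_natCast_div_of_tendsto_natCast_mul hFpos
      (tendsto_mul_atTop_of_doubling hFanti hx₀ (hFpos x₀ hx₀) hρ hρ2 hdbl) ha hapos han
  refine tendsto_nhdsWithin_zero_of_le_rpow (C := 2 * d / δ * (2 * ρ / (2 - ρ))) (sub_pos.2 hα1)
    (fun u => le_limsup_of_frequently_le (.of_forall fun n => measureReal_nonneg)
      (isBoundedUnder_of ⟨1, fun n => measureReal_le_one⟩)) fun u hu => ?_
  have hF_ua := tendsto_natCast_mul_comp_mul hFpos (hrv u hu) ha hapos han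
  have hlim := ((hna.const_mul (2 * x₀)).add
    ((hF_ua.const_mul u).const_mul (2 * ρ / (2 - ρ)))).const_mul (2 * d / δ)
  rw [mul_zero, zero_add, ← Real.rpow_one_add' hu.le (by linarith), ← sub_eq_add_neg,
    ← mul_assoc (2 * d / δ)] at hlim
  exact limsup_le_of_le_of_tendsto (fun n => measureReal_nonneg)
    (fun n => measureReal_exists_norm_truncatedSum_gt_le_of_doubling hmeas hident hx₀ hρ.le hρ2
      hdbl (hapos n) hu hδ n) hlim

/-- Vanishing small jumps (Condition 3.3 holds automatically when `α ∈ (0,1)`): for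
identically distributed random vectors whose norm has a regularly varying tail of index
`-α`, `α ∈ (0,1)`, and `n P(‖X₁‖ > aₙ) → 1`, the maximal deviation of the centered
small-jump partial sums vanishes: `lim_{u↓0} limsup_n I(u,n) = 0`. -/
theorem vanishing_small_jumps
    {Ω : Type*} [MeasurableSpace Ω] (ℙ : Measure Ω) [IsProbabilityMeasure ℙ]
    {d : ℕ} (X : ℕ → Ω → EuclideanSpace ℝ (Fin d))
    (hmeas : ∀ i, Measurable (X i))
    (hident : ∀ i, 1 ≤ i → Measure.map (X i) ℙ = Measure.map (X 1) ℙ)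
    (α : ℝ) (hα : 0 < α) (hα1 : α < 1)
    (hpos : ∀ x : ℝ, 0 < x → 0 < ℙ {ω | ‖X 1 ω‖ > x})
    (hrv : ∀ l : ℝ, 0 < l →
      Tendsto (fun x : ℝ => (ℙ {ω | ‖X 1 ω‖ > l * x}).toReal / (ℙ {ω | ‖X 1 ω‖ > x}).toReal)
        atTop (nhds (l ^ (-α))))
    (a : ℕ → ℝ) (hapos : ∀ n, 0 < a n)
    (han : Tendsto (fun n : ℕ => (n : ℝ) * (ℙ {ω | ‖X 1 ω‖ > a n}).toReal) atTop (nhds 1))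
    (δ : ℝ) (hδ : 0 < δ) :
    Tendsto
      (fun u : ℝ =>
        Filter.limsup
          (fun n : ℕ =>
            (ℙ {ω | ∃ k, 1 ≤ k ∧ k ≤ n ∧
              δ < ‖(WithLp.equiv 2 (Fin d → ℝ)).symm (fun j =>
                ∑ i ∈ Finset.Icc 1 k,
                  ((if |X i ω j| ≤ u * a n then X i ω j / a n else 0)
                    - ∫ ω', (if |X 1 ω' j| ≤ u * a n then X 1 ω' j / a n else 0) ∂ℙ))‖}).toReal)
          atTop)
      (nhdsWithin 0 (Set.Ioi 0)) (nhds 0) :=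
  vanishing_small_jumps_general ℙ X hmeas hident α hα1 hpos hrv a hapos han δ hδ
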